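/- arXiv:2010.15729 — 7 statements merged into one kernel-verified Lean document; each statement's English description precedes it below -/
import Mathlib

section
/- If R and R' are positive definite block matrices with top-left blocks X and X' respectively, and R ≥ R' in the Loewner order, then the Schur complements satisfy R/X ≥ R'/X'. -/
/-!
The quadratic form of the Schur complement is a minimum of the quadratic form of the block
matrix: `y* (R/X) y ≤ (x, y)* R (x, y)` for every `x` (complete the square in `x` and use `X ≥ 0`),
with equality at `x = -X⁻¹ Z y`. Evaluating `R - R' ≥ 0` at this minimiser `w` for `R` gives
`y* (R/X) y = w* R w ≥ w* R' w ≥ y* (R'/X') y`.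
-/

open Matrix

namespace Matrix

variable {m n 𝕜 : Type*}

theorem PosDef.toBlocks₁₁ [Ring 𝕜] [PartialOrder 𝕜] [StarRing 𝕜]
    {M : Matrix (m ⊕ n) (m ⊕ n) 𝕜} (hM : M.PosDef) : M.toBlocks₁₁.PosDef :=
  hM.submatrix Sum.inl_injective

variable [Fintype m] [Fintype n] [DecidableEq m] [CommRing 𝕜] [StarRing 𝕜]
  {A A' : Matrix m m 𝕜} {B B' : Matrix m n 𝕜} {D D' : Matrix n n 𝕜}

theorem dotProduct_schurComplement_mulVec_eq [Invertible A] (hA : A.IsHermitian) (y : n → 𝕜) :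
    star (-((A⁻¹ * B) *ᵥ y) ⊕ᵥ y) ⬝ᵥ fromBlocks A B Bᴴ D *ᵥ (-((A⁻¹ * B) *ᵥ y) ⊕ᵥ y)
      = star y ⬝ᵥ (D - Bᴴ * A⁻¹ * B) *ᵥ y := by
  rw [dotProduct_mulVec, schur_complement_eq₁₁ B D _ y hA, neg_add_cancel,
    dotProduct_zero, zero_add, dotProduct_mulVec]

variable [PartialOrder 𝕜] [StarOrderedRing 𝕜]

theorem dotProduct_schurComplement_mulVec_le [Invertible A] (hA : A.PosSemidef)
    (x : m → 𝕜) (y : n → 𝕜) :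
    star y ⬝ᵥ (D - Bᴴ * A⁻¹ * B) *ᵥ y
      ≤ star (x ⊕ᵥ y) ⬝ᵥ fromBlocks A B Bᴴ D *ᵥ (x ⊕ᵥ y) := by
  rw [dotProduct_mulVec (star (x ⊕ᵥ y)), schur_complement_eq₁₁ B D x y hA.isHermitian,
    ← dotProduct_mulVec, ← dotProduct_mulVec]
  exact le_add_of_nonneg_left ((posSemidef_iff_dotProduct_mulVec.mp hA).2 _)

theorem posSemidef_schurComplement_sub [Invertible A] [Invertible A']
    (hA : A.IsHermitian) (hA' : A'.PosSemidef) (hR' : (fromBlocks A' B' B'ᴴ D').IsHermitian)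
    (hle : (fromBlocks A B Bᴴ D - fromBlocks A' B' B'ᴴ D').PosSemidef) :
    ((D - Bᴴ * A⁻¹ * B) - (D' - B'ᴴ * A'⁻¹ * B')).PosSemidef := by
  have hR : (fromBlocks A B Bᴴ D).IsHermitian := by simpa using hle.isHermitian.add hR'
  have hS := (IsHermitian.fromBlocks₁₁ B D hA).mp hR
  have hS' := (IsHermitian.fromBlocks₁₁ B' D' hA'.isHermitian).mp hR'
  refine posSemidef_iff_dotProduct_mulVec.mpr ⟨hS.sub hS', fun y => ?_⟩
  have hw := (posSemidef_iff_dotProduct_mulVec.mp hle).2 (-((A⁻¹ * B) *ᵥ y) ⊕ᵥ y)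
  rw [sub_mulVec, dotProduct_sub] at hw ⊢
  rw [← dotProduct_schurComplement_mulVec_eq hA]
  exact sub_nonneg.mpr ((dotProduct_schurComplement_mulVec_le hA' _ y).trans (sub_nonneg.mp hw))

end Matrix

theorem schur_complement_mono_general {n m : Type*} [Fintype n] [Fintype m]
    [DecidableEq n]
    (X X' : Matrix n n ℝ) (Y Y' : Matrix m m ℝ) (Z Z' : Matrix n m ℝ)
    (hR : (fromBlocks X Z Zᵀ Y).PosDef) (hR' : (fromBlocks X' Z' Z'ᵀ Y').PosDef)
    (hle : ((fromBlocks X Z Zᵀ Y) - (fromBlocks X' Z' Z'ᵀ Y')).PosSemidef) :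
    ((Y - Zᵀ * X⁻¹ * Z) - (Y' - Z'ᵀ * X'⁻¹ * Z')).PosSemidef := by
  simp only [← conjTranspose_eq_transpose_of_trivial] at hR' hle ⊢
  have hX : X.PosDef := by simpa using hR.toBlocks₁₁
  have hX' : X'.PosDef := by simpa using hR'.toBlocks₁₁
  have := hX.isUnit.invertible
  have := hX'.isUnit.invertible
  exact posSemidef_schurComplement_sub hX.isHermitian hX'.posSemidef hR'.isHermitian hle

/-- Monotonicity of the Schur complement: if `R ≥ R'` (Loewner order) for positive
definite block matrices `R = [[X,Z],[Zᵀ,Y]]`, `R' = [[X',Z'],[Z'ᵀ,Y']]`, then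
`R/X ≥ R'/X'`. -/
theorem schur_complement_mono {n m : Type*} [Fintype n] [Fintype m]
    [DecidableEq n] [DecidableEq m]
    (X X' : Matrix n n ℝ) (Y Y' : Matrix m m ℝ) (Z Z' : Matrix n m ℝ)
    (hR : (fromBlocks X Z Zᵀ Y).PosDef) (hR' : (fromBlocks X' Z' Z'ᵀ Y').PosDef)
    (hle : ((fromBlocks X Z Zᵀ Y) - (fromBlocks X' Z' Z'ᵀ Y')).PosSemidef) :
    ((Y - Zᵀ * X⁻¹ * Z) - (Y' - Z'ᵀ * X'⁻¹ * Z')).PosSemidef :=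
  schur_complement_mono_general X X' Y Y' Z Z' hR hR' hle
end

section
/- If V_AB ≥ iΩ_AB and Γ_A ≥ iΩ_A (as Hermitian matrices), then the Schur complement V'_B := (V_AB + Γ_A ⊕ 0_B)/(V_A + Γ_A) satisfies V'_B ≥ iΩ_B. -/
open Matrix ComplexOrder

/-! Complex conjugation turns `Γ_A ≥ iΩ_A` into `Γ_A ≥ -iΩ_A`, so adding `(Γ_A + iΩ_A) ⊕ 0_B ≥ 0`
to `V_AB - iΩ_AB ≥ 0` gives the positive semidefinite matrix
`[[V_A + Γ_A, V_AB], [V_BA, V_B - iΩ_B]]`, whose Schur complement with respect to its top-left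
block is `V'_B - iΩ_B`. -/

/-- The standard symplectic form on `m` modes, in the `x|p` block representation. -/
noncomputable def Omg (m : ℕ) : Matrix (Fin m ⊕ Fin m) (Fin m ⊕ Fin m) ℝ :=
  fromBlocks 0 1 (-1) 0

namespace Matrix

lemma PosSemidef.map_star {n R : Type*} [CommRing R] [PartialOrder R] [StarRing R]
    {A : Matrix n n R} (hA : A.PosSemidef) : (A.map star).PosSemidef := by
  simpa only [← conjTranspose_transpose, hA.isHermitian.eq] using hA.transpose

lemma PosSemidef.fromBlocks_zero {m n R : Type*} [Fintype m] [Finite n] [DecidableEq m]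
    [CommRing R] [PartialOrder R] [StarRing R] {A : Matrix m m R} (hA : A.PosSemidef) :
    (fromBlocks A 0 0 (0 : Matrix n n R)).PosSemidef := by
  convert hA.conjTranspose_mul_mul_same (fromCols (1 : Matrix m m R) (0 : Matrix m n R)) using 1
  simp [conjTranspose_fromCols_eq_fromRows_conjTranspose, fromRows_mul,
    ← fromCols_fromRows_eq_fromBlocks]

/-- If `M₁₁` is singular then `M₁₁⁻¹ = 0`, and the Schur complement degenerates to `M₂₂`. -/
lemma PosSemidef.schur_toBlocks₁₁ {m n 𝕜 : Type*} [Fintype m] [Fintype n] [DecidableEq m]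
    [RCLike 𝕜] {M : Matrix (m ⊕ n) (m ⊕ n) 𝕜} (hM : M.PosSemidef) :
    (M.toBlocks₂₂ - M.toBlocks₂₁ * M.toBlocks₁₁⁻¹ * M.toBlocks₁₂).PosSemidef := by
  by_cases hA : IsUnit M.toBlocks₁₁
  · have hApd : M.toBlocks₁₁.PosDef := (hM.submatrix Sum.inl).posDef_iff_isUnit.mpr hA
    have hB : M.toBlocks₂₁ = M.toBlocks₁₂ᴴ := by
      ext i j
      exact (hM.isHermitian.apply _ _).symm
    have := hA.invertible
    rw [← fromBlocks_toBlocks M, hB] at hM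
    rw [hB]
    exact (hApd.fromBlocks₁₁ _ _).mp hM
  · rw [nonsing_inv_apply_not_isUnit _ (by rwa [← isUnit_iff_isUnit_det]), Matrix.mul_zero,
      Matrix.zero_mul, sub_zero]
    exact hM.submatrix Sum.inr

lemma map_nonsing_inv {n K L : Type*} [Fintype n] [DecidableEq n] [Field K] [Field L]
    (f : K →+* L) (A : Matrix n n K) : A⁻¹.map f = (A.map f)⁻¹ := by
  have hadj := RingHom.map_adjugate f A
  have hdet := RingHom.map_det f A
  simp only [RingHom.mapMatrix_apply] at hadj hdet
  rw [inv_def, inv_def, ← hdet, ← hadj]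
  ext i j
  simp

lemma map_schur {n l K L : Type*} [Fintype n] [DecidableEq n] [Field K] [Field L]
    (f : K →+* L) (A : Matrix n n K) (B : Matrix n l K) (C : Matrix l n K) (D : Matrix l l K) :
    (D - C * A⁻¹ * B).map f = D.map f - C.map f * (A.map f)⁻¹ * B.map f := by
  rw [Matrix.map_sub f (map_sub f), Matrix.map_mul, Matrix.map_mul, map_nonsing_inv]

end Matrix

/-- If `V_AB ≥ iΩ_AB` and `Γ_A ≥ iΩ_A` (as Hermitian matrices), then the Schur complement
`V'_B := (V_AB + Γ_A ⊕ 0_B)/(V_A + Γ_A)` satisfies `V'_B ≥ iΩ_B`. -/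
theorem schur_qcm_of_measurement {a b : ℕ}
    (V : Matrix ((Fin a ⊕ Fin a) ⊕ (Fin b ⊕ Fin b)) ((Fin a ⊕ Fin a) ⊕ (Fin b ⊕ Fin b)) ℝ)
    (Γ : Matrix (Fin a ⊕ Fin a) (Fin a ⊕ Fin a) ℝ)
    (hV : ((V.map Complex.ofReal) -
      Complex.I • (fromBlocks (Omg a) 0 0 (Omg b)).map Complex.ofReal).PosSemidef)
    (hΓ : ((Γ.map Complex.ofReal) - Complex.I • (Omg a).map Complex.ofReal).PosSemidef) :
    (((V.toBlocks₂₂ - V.toBlocks₂₁ * (V.toBlocks₁₁ + Γ)⁻¹ * V.toBlocks₁₂).map Complex.ofReal)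
      - Complex.I • (Omg b).map Complex.ofReal).PosSemidef := by
  have hconj : (Γ.map Complex.ofReal - Complex.I • (Omg a).map Complex.ofReal).map star =
      Γ.map Complex.ofReal + Complex.I • (Omg a).map Complex.ofReal := by
    ext; simp
  set M := V.map Complex.ofReal - Complex.I • (fromBlocks (Omg a) 0 0 (Omg b)).map Complex.ofReal
    + fromBlocks (Γ.map Complex.ofReal + Complex.I • (Omg a).map Complex.ofReal) 0 0
      (0 : Matrix (Fin b ⊕ Fin b) (Fin b ⊕ Fin b) ℂ)
  have hM : M.PosSemidef := hV.add (hconj ▸ hΓ.map_star).fromBlocks_zero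
  have h₁₁ : M.toBlocks₁₁ = (V.toBlocks₁₁ + Γ).map Complex.ofReal := by ext; simp [M, toBlocks₁₁]
  have h₁₂ : M.toBlocks₁₂ = V.toBlocks₁₂.map Complex.ofReal := by ext; simp [M, toBlocks₁₂]
  have h₂₁ : M.toBlocks₂₁ = V.toBlocks₂₁.map Complex.ofReal := by ext; simp [M, toBlocks₂₁]
  have h₂₂ : M.toBlocks₂₂ =
      V.toBlocks₂₂.map Complex.ofReal - Complex.I • (Omg b).map Complex.ofReal := by
    ext; simp [M, toBlocks₂₂]
  have hmap : (V.toBlocks₂₂ - V.toBlocks₂₁ * (V.toBlocks₁₁ + Γ)⁻¹ * V.toBlocks₁₂).map Complex.ofReal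
      = V.toBlocks₂₂.map Complex.ofReal - V.toBlocks₂₁.map Complex.ofReal *
        ((V.toBlocks₁₁ + Γ).map Complex.ofReal)⁻¹ * V.toBlocks₁₂.map Complex.ofReal :=
    map_schur Complex.ofRealHom _ _ _ _
  rw [hmap, sub_right_comm, ← h₁₁, ← h₁₂, ← h₂₁, ← h₂₂]
  exact hM.schur_toBlocks₁₁
end

section
/- If V_AB and Γ_A are pure quantum covariance matrices (i.e., QCMs with determinant 1), then the Schur complement V'_B := (V_AB + Γ_A ⊕ 0_B)/(V_A + Γ_A) is also a pure QCM, i.e., det V'_B = 1 and V'_B ≥ iΩ_B. -/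
/-!
Purity makes both matrices symplectic, `V J V = J` and `Γ Ω Γ = Ω`, so `V⁻¹ = -J V J` and
`Γ⁻¹ = -Ω Γ Ω`; with these, `det (V + Γ ⊕ 0)` and `det (V_A + Γ)` both reduce to
`det (1 - Ω V_A Ω Γ)`, and the Schur determinant formula gives `det V'_B = 1`.
For positivity, `(V - iJ) + (Γ + iΩ) ⊕ 0 ≥ 0` (the second summand is the transpose of `Γ - iΩ`),
its `A`-block `V_A + Γ` is positive definite, and its Schur complement is `V'_B - iΩ_B`.
-/

open Matrix ComplexOrder

section Determinants

variable {R : Type*} [CommRing R] {l m n : Type*} [Fintype l] [Fintype m] [Fintype n]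
  [DecidableEq l] [DecidableEq m] [DecidableEq n]

lemma fromBlocks_zero_zero_mul_self {P : Matrix l l R} {Q : Matrix m m R} (hP : P * P = -1)
    (hQ : Q * Q = -1) : fromBlocks P 0 0 Q * fromBlocks P 0 0 Q = -1 := by
  simp [fromBlocks_multiply, hP, hQ, ← fromBlocks_one, fromBlocks_neg]

lemma inv_eq_neg_mul_mul_of_mul_mul_eq {N J : Matrix n n R} (hJ : J * J = -1)
    (h : N * J * N = J) : N⁻¹ = -(J * N * J) :=
  inv_eq_right_inv (by rw [mul_neg, ← mul_assoc, ← mul_assoc, h, hJ, neg_neg])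

lemma det_add_eq_det_mul_det_one_add_inv_mul {G : Matrix n n R} (hG : IsUnit G.det)
    (X : Matrix n n R) : (G + X).det = G.det * (1 + G⁻¹ * X).det := by
  rw [← det_mul, mul_add, mul_one, mul_nonsing_inv_cancel_left _ _ hG]

lemma det_add_fromBlocks_zero {V : Matrix (l ⊕ m) (l ⊕ m) R} (hV : IsUnit V.det)
    (G : Matrix l l R) :
    (V + fromBlocks G 0 0 0).det = V.det * (1 + V⁻¹.toBlocks₁₁ * G).det := by
  have hinv : V⁻¹ * fromBlocks G 0 0 0
      = fromBlocks (V⁻¹.toBlocks₁₁ * G) 0 (V⁻¹.toBlocks₂₁ * G) 0 := by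
    conv_lhs => rw [← fromBlocks_toBlocks V⁻¹]
    simp [fromBlocks_multiply]
  rw [det_add_eq_det_mul_det_one_add_inv_mul hV, hinv, ← fromBlocks_one, fromBlocks_add]
  simp

lemma det_one_sub_mul_mul_mul_comm (P X Y : Matrix n n R) :
    (1 - P * X * P * Y).det = (1 - P * Y * P * X).det := by
  rw [det_one_sub_mul_comm, show Y * (P * X * P) = Y * P * X * P by noncomm_ring,
    det_one_sub_mul_comm, ← mul_assoc, ← mul_assoc]

lemma det_add_fromBlocks_zero_eq_det_toBlocks₁₁_add {P : Matrix l l R} {Q : Matrix m m R}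
    (hP : P * P = -1) (hQ : Q * Q = -1) {V : Matrix (l ⊕ m) (l ⊕ m) R} {G : Matrix l l R}
    (hV : V * fromBlocks P 0 0 Q * V = fromBlocks P 0 0 Q) (hG : G * P * G = P)
    (hVdet : V.det = 1) (hGdet : G.det = 1) :
    (V + fromBlocks G 0 0 0).det = (V.toBlocks₁₁ + G).det := by
  have hV₁₁ : V⁻¹.toBlocks₁₁ = -(P * V.toBlocks₁₁ * P) := by
    rw [inv_eq_neg_mul_mul_of_mul_mul_eq (fromBlocks_zero_zero_mul_self hP hQ) hV]
    conv_lhs => rw [← fromBlocks_toBlocks V]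
    simp [fromBlocks_multiply, fromBlocks_neg]
  calc (V + fromBlocks G 0 0 0).det = (1 - P * V.toBlocks₁₁ * P * G).det := by
        rw [det_add_fromBlocks_zero (by simp [hVdet]), hVdet, hV₁₁, one_mul, neg_mul,
          ← sub_eq_add_neg]
    _ = (1 - P * G * P * V.toBlocks₁₁).det := det_one_sub_mul_mul_mul_comm _ _ _
    _ = (V.toBlocks₁₁ + G).det := by
        rw [add_comm, det_add_eq_det_mul_det_one_add_inv_mul (by simp [hGdet]), hGdet,
          inv_eq_neg_mul_mul_of_mul_mul_eq hP hG, one_mul, neg_mul, ← sub_eq_add_neg]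

lemma det_schur_complement_eq_one {K : Type*} [Field K] {P : Matrix l l K} {Q : Matrix m m K}
    (hP : P * P = -1) (hQ : Q * Q = -1) {V : Matrix (l ⊕ m) (l ⊕ m) K} {G : Matrix l l K}
    (hV : V * fromBlocks P 0 0 Q * V = fromBlocks P 0 0 Q) (hG : G * P * G = P)
    (hVdet : V.det = 1) (hGdet : G.det = 1) (hA : (V.toBlocks₁₁ + G).det ≠ 0) :
    (V.toBlocks₂₂ - V.toBlocks₂₁ * (V.toBlocks₁₁ + G)⁻¹ * V.toBlocks₁₂).det = 1 := by
  have := (V.toBlocks₁₁ + G).invertibleOfIsUnitDet hA.isUnit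
  have hsum : V + fromBlocks G 0 0 0
      = fromBlocks (V.toBlocks₁₁ + G) V.toBlocks₁₂ V.toBlocks₂₁ V.toBlocks₂₂ := by
    conv_lhs => rw [← fromBlocks_toBlocks V]
    simp [fromBlocks_add]
  have hdet := det_fromBlocks₁₁ (V.toBlocks₁₁ + G) V.toBlocks₁₂ V.toBlocks₂₁ V.toBlocks₂₂
  rw [← hsum, det_add_fromBlocks_zero_eq_det_toBlocks₁₁_add hP hQ hV hG hVdet hGdet,
    invOf_eq_nonsing_inv] at hdet
  exact (mul_eq_left₀ hA).mp hdet.symm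

end Determinants

section Positivity

variable {l m n : Type*}

lemma Matrix.PosSemidef.of_two_smul {N : Matrix n n ℂ} (h : ((2 : ℝ) • N).PosSemidef) :
    N.PosSemidef := by
  simpa [smul_smul] using h.smul (a := (2⁻¹ : ℝ)) (by norm_num)

lemma Matrix.PosSemidef.of_sub_of_add {N X : Matrix n n ℂ} (hsub : (N - X).PosSemidef)
    (hadd : (N + X).PosSemidef) : N.PosSemidef :=
  .of_two_smul (by simpa [two_smul] using hsub.add hadd)

variable [Fintype l] [Fintype m] [Fintype n] [DecidableEq n]

/-- `2 (1 - B²) = (1 + B)(1 - B)(1 + B) + (1 - B)(1 + B)(1 - B)`. -/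
lemma posSemidef_one_sub_mul_self {B : Matrix n n ℂ} (hsub : (1 - B).PosSemidef)
    (hadd : (1 + B).PosSemidef) : (1 - B * B).PosSemidef := by
  have key := (hsub.conjTranspose_mul_mul_same (1 + B)).add
    (hadd.conjTranspose_mul_mul_same (1 - B))
  rw [hadd.1.eq, hsub.1.eq] at key
  refine .of_two_smul ?_
  convert key using 1
  rw [two_smul]
  noncomm_ring

lemma eq_one_of_posSemidef_one_sub_of_det_eq_one {C : Matrix n n ℂ} (hC : C.PosSemidef)
    (h1 : (1 - C).PosSemidef) (hdet : C.det = 1) : C = 1 := by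
  have hμ_nonneg : ∀ i, 0 ≤ hC.1.eigenvalues i := hC.eigenvalues_nonneg
  have hμ_le_one : ∀ i, hC.1.eigenvalues i ≤ 1 := fun i => by
    have hv : star ⇑(hC.1.eigenvectorBasis i) ⬝ᵥ ⇑(hC.1.eigenvectorBasis i) = 1 := by
      rw [dotProduct_comm, ← EuclideanSpace.inner_eq_star_dotProduct, inner_self_eq_norm_sq_to_K,
        hC.1.eigenvectorBasis.orthonormal.1 i]
      simp
    have := h1.re_dotProduct_nonneg (hC.1.eigenvectorBasis i)
    rwa [sub_mulVec, one_mulVec, dotProduct_sub, map_sub, ← hC.1.eigenvalues_eq, hv,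
      RCLike.one_re, sub_nonneg] at this
  have hμ_prod : ∏ i, hC.1.eigenvalues i = 1 := by
    have := hC.1.det_eq_prod_eigenvalues
    rw [hdet, ← RCLike.ofReal_prod] at this
    exact RCLike.ofReal_injective (K := ℂ) (by simpa using this.symm)
  have hμ : ∀ i, hC.1.eigenvalues i = 1 := fun i => by
    refine le_antisymm (hμ_le_one i) ?_
    calc 1 = hC.1.eigenvalues i * ∏ j ∈ Finset.univ.erase i, hC.1.eigenvalues j := by
          rw [Finset.mul_prod_erase _ _ (Finset.mem_univ i), hμ_prod]
      _ ≤ hC.1.eigenvalues i * 1 := by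
          gcongr
          · exact hμ_nonneg i
          · exact Finset.prod_le_one (fun j _ => hμ_nonneg j) (fun j _ => hμ_le_one j)
      _ = hC.1.eigenvalues i := mul_one _
  have htr : (1 - C).trace = 0 := by
    simp [trace_sub, hC.1.trace_eq_sum_eigenvalues, hμ]
  exact (sub_eq_zero.mp (h1.trace_eq_zero_iff.mp htr)).symm

open scoped MatrixOrder in
lemma Matrix.PosSemidef.exists_isHermitian_mul_self_eq {A : Matrix n n ℂ} (hA : A.PosSemidef) :
    ∃ R : Matrix n n ℂ, R.IsHermitian ∧ R * R = A :=
  ⟨CFC.sqrt A, (CFC.sqrt_nonneg A).isSelfAdjoint, CFC.sqrt_mul_sqrt_self A hA.nonneg⟩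

/-- With `R = N^{-1/2}`, the Hermitian matrix `B = i R J R` satisfies `-1 ≤ B ≤ 1` and
`det B² = 1`, which forces `B² = 1`, i.e. `J N⁻¹ J = -N`. -/
lemma mul_mul_eq_of_det_eq_one {N J : Matrix n n ℂ} (hJ : J * J = -1) (hdet : N.det = 1)
    (hsub : (N - Complex.I • J).PosSemidef) (hadd : (N + Complex.I • J).PosSemidef) :
    N * J * N = J := by
  have hNu : IsUnit N.det := by simp [hdet]
  obtain ⟨R, hRH, hRR⟩ := (hsub.of_sub_of_add hadd).inv.exists_isHermitian_mul_self_eq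
  have hRRN : R * R * N = 1 := by rw [hRR, nonsing_inv_mul _ hNu]
  have hNRR : N * R * R = 1 := by rw [mul_assoc, hRR, mul_nonsing_inv _ hNu]
  have hRNR : R * N * R = 1 := mul_eq_one_comm.mp (by rwa [← mul_assoc])
  set B := Complex.I • (R * J * R)
  have hB_sub : (1 - B).PosSemidef := by
    simpa [B, hRH.eq, mul_sub, sub_mul, hRNR] using hsub.conjTranspose_mul_mul_same R
  have hB_add : (1 + B).PosSemidef := by
    simpa [B, hRH.eq, mul_add, add_mul, hRNR] using hadd.conjTranspose_mul_mul_same R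
  have hB_sq : B * B = -(R * (J * N⁻¹ * J) * R) := by
    rw [smul_mul_smul_comm, Complex.I_mul_I, neg_one_smul, ← hRR]
    noncomm_ring
  have hB_det : (B * B).det = 1 := by
    have hR : R.det * R.det = 1 := by
      rw [← det_mul, hRR, det_nonsing_inv, hdet, Ring.inverse_one]
    have hJ' : J.det * J.det = (-1) ^ Fintype.card n := by
      rw [← det_mul, hJ, det_neg, det_one, mul_one]
    rw [hB_sq, det_neg, det_mul, det_mul, det_mul, det_mul, det_nonsing_inv, hdet,
      Ring.inverse_one]
    calc (-1) ^ Fintype.card n * (R.det * (J.det * 1 * J.det) * R.det)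
        = (-1) ^ Fintype.card n * ((R.det * R.det) * (J.det * J.det)) := by ring
      _ = 1 := by rw [hR, hJ', one_mul, ← mul_pow]; norm_num
  have hB_herm : B.IsHermitian := by simpa using hB_add.1.sub isHermitian_one
  have hBB : R * (J * N⁻¹ * J) * R = -1 := by
    rw [← neg_eq_iff_eq_neg, ← hB_sq]
    refine eq_one_of_posSemidef_one_sub_of_det_eq_one ?_
      (posSemidef_one_sub_mul_self hB_sub hB_add) hB_det
    simpa [hB_herm.eq] using posSemidef_conjTranspose_mul_self B
  have hJNJ : J * N⁻¹ * J = -N := calc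
    J * N⁻¹ * J = (N * R * R) * (J * N⁻¹ * J) * (R * R * N) := by
        rw [hNRR, hRRN, one_mul, mul_one]
    _ = N * R * (R * (J * N⁻¹ * J) * R) * R * N := by noncomm_ring
    _ = -N := by rw [hBB, mul_neg_one, neg_mul, neg_mul, hNRR, one_mul]
  calc N * J * N = -(J * N⁻¹ * J) * J * N := by rw [hJNJ, neg_neg]
    _ = -(J * N⁻¹ * (J * J) * N) := by noncomm_ring
    _ = J := by rw [hJ, mul_neg_one, neg_mul, neg_neg, mul_assoc, nonsing_inv_mul _ hNu, mul_one]

lemma posSemidef_fromBlocks_zero [DecidableEq l] {P : Matrix l l ℂ} (hP : P.PosSemidef) :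
    (fromBlocks P 0 0 (0 : Matrix m m ℂ)).PosSemidef := by
  have := hP.mul_mul_conjTranspose_same (fromRows (1 : Matrix l l ℂ) (0 : Matrix m l ℂ))
  rwa [conjTranspose_fromRows_eq_fromCols_conjTranspose, fromRows_mul, fromRows_mul_fromCols,
    conjTranspose_one, conjTranspose_zero, Matrix.one_mul, Matrix.mul_one, Matrix.zero_mul,
    Matrix.mul_zero, Matrix.zero_mul, Matrix.zero_mul] at this

lemma Matrix.PosSemidef.schur_complement₁₁ [DecidableEq l] {A : Matrix l l ℂ}
    {B : Matrix l m ℂ} {C : Matrix m l ℂ} {D : Matrix m m ℂ}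
    (h : (fromBlocks A B C D).PosSemidef) (hA : A.PosDef) : (D - C * A⁻¹ * B).PosSemidef := by
  obtain rfl : Bᴴ = C := (isHermitian_fromBlocks_iff.mp h.1).2.1
  have := hA.isUnit.invertible
  exact (PosDef.fromBlocks₁₁ _ _ hA).mp h

end Positivity

section Complexification

variable {l m n : Type*}

/-- Transposing `N - iJ` gives `N + iJ`. -/
lemma posSemidef_map_ofReal_add_of_sub {N J : Matrix n n ℝ} (hN : N.IsSymm) (hJ : Jᵀ = -J)
    (h : (N.map Complex.ofReal - Complex.I • J.map Complex.ofReal).PosSemidef) :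
    (N.map Complex.ofReal + Complex.I • J.map Complex.ofReal).PosSemidef := by
  simpa [← transpose_map, hN.eq, hJ, Matrix.map_neg _ Complex.ofReal_neg, sub_eq_add_neg]
    using h.transpose

lemma posSemidef_map_ofReal_of_sub {N J : Matrix n n ℝ} (hN : N.IsSymm) (hJ : Jᵀ = -J)
    (h : (N.map Complex.ofReal - Complex.I • J.map Complex.ofReal).PosSemidef) :
    (N.map Complex.ofReal).PosSemidef :=
  h.of_sub_of_add (posSemidef_map_ofReal_add_of_sub hN hJ h)

variable [Fintype n]

lemma map_ofReal_mul (M : Matrix l n ℝ) (N : Matrix n m ℝ) :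
    (M * N).map Complex.ofReal = M.map Complex.ofReal * N.map Complex.ofReal :=
  Matrix.map_mul (f := Complex.ofRealHom)

variable [DecidableEq n]

lemma det_map_ofReal (M : Matrix n n ℝ) : (M.map Complex.ofReal).det = M.det :=
  (Complex.ofRealHom.map_det M).symm

lemma map_ofReal_inv (M : Matrix n n ℝ) : M⁻¹.map Complex.ofReal = (M.map Complex.ofReal)⁻¹ := by
  by_cases h : IsUnit M.det
  · refine (inv_eq_left_inv ?_).symm
    rw [← map_ofReal_mul, nonsing_inv_mul _ h]
    simp
  · have h' : ¬IsUnit (M.map Complex.ofReal).det := by simpa [det_map_ofReal] using h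
    rw [nonsing_inv_apply_not_isUnit _ h, nonsing_inv_apply_not_isUnit _ h']
    simp

lemma mul_mul_eq_of_isSymm_of_det_eq_one {N J : Matrix n n ℝ} (hN : N.IsSymm) (hJt : Jᵀ = -J)
    (hJ : J * J = -1) (hdet : N.det = 1)
    (h : (N.map Complex.ofReal - Complex.I • J.map Complex.ofReal).PosSemidef) :
    N * J * N = J := by
  refine map_injective Complex.ofReal_injective ?_
  dsimp only
  rw [map_ofReal_mul, map_ofReal_mul]
  refine mul_mul_eq_of_det_eq_one ?_ (by simp [det_map_ofReal, hdet]) h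
    (posSemidef_map_ofReal_add_of_sub hN hJt h)
  rw [← map_ofReal_mul, hJ, Matrix.map_neg _ Complex.ofReal_neg,
    Matrix.map_one _ Complex.ofReal_zero Complex.ofReal_one]

lemma posSemidef_schur_complement_map_ofReal [Fintype l] [Fintype m] [DecidableEq l]
    [DecidableEq m] {P : Matrix l l ℝ} {Q : Matrix m m ℝ} {V : Matrix (l ⊕ m) (l ⊕ m) ℝ}
    {G : Matrix l l ℝ}
    (hV : (V.map Complex.ofReal - Complex.I • (fromBlocks P 0 0 Q).map Complex.ofReal).PosSemidef)
    (hG : (G.map Complex.ofReal + Complex.I • P.map Complex.ofReal).PosSemidef)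
    (hA : ((V.toBlocks₁₁ + G).map Complex.ofReal).PosDef) :
    ((V.toBlocks₂₂ - V.toBlocks₂₁ * (V.toBlocks₁₁ + G)⁻¹ * V.toBlocks₁₂).map Complex.ofReal
      - Complex.I • Q.map Complex.ofReal).PosSemidef := by
  have hW : (fromBlocks ((V.toBlocks₁₁ + G).map Complex.ofReal) (V.toBlocks₁₂.map Complex.ofReal)
      (V.toBlocks₂₁.map Complex.ofReal)
      (V.toBlocks₂₂.map Complex.ofReal - Complex.I • Q.map Complex.ofReal)).PosSemidef := by
    convert hV.add (posSemidef_fromBlocks_zero hG) using 1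
    ext (i | i) (j | j) <;> simp [toBlocks₁₁, toBlocks₁₂, toBlocks₂₁, toBlocks₂₂]
  have := hW.schur_complement₁₁ hA
  rwa [← map_ofReal_inv, ← map_ofReal_mul, ← map_ofReal_mul, sub_right_comm,
    ← Matrix.map_sub _ Complex.ofReal_sub] at this

end Complexification

lemma Omg_transpose (k : ℕ) : (Omg k)ᵀ = -Omg k := by
  simp [Omg, fromBlocks_transpose, fromBlocks_neg]

lemma Omg_mul_self (k : ℕ) : Omg k * Omg k = -1 := by
  simp [Omg, fromBlocks_multiply, ← fromBlocks_one, fromBlocks_neg]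

/-- If `V_AB` and `Γ_A` are pure QCMs (real symmetric, `≥ iΩ`, determinant one), then the
Schur complement `V'_B := (V_AB + Γ_A ⊕ 0_B)/(V_A + Γ_A)` is also a pure QCM:
`det V'_B = 1` and `V'_B ≥ iΩ_B`. -/
theorem schur_pure_of_pure {a b : ℕ}
    (V : Matrix ((Fin a ⊕ Fin a) ⊕ (Fin b ⊕ Fin b)) ((Fin a ⊕ Fin a) ⊕ (Fin b ⊕ Fin b)) ℝ)
    (Γ : Matrix (Fin a ⊕ Fin a) (Fin a ⊕ Fin a) ℝ)
    (hVs : V.IsSymm) (hΓs : Γ.IsSymm)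
    (hV : ((V.map Complex.ofReal) -
      Complex.I • (fromBlocks (Omg a) 0 0 (Omg b)).map Complex.ofReal).PosSemidef)
    (hΓ : ((Γ.map Complex.ofReal) - Complex.I • (Omg a).map Complex.ofReal).PosSemidef)
    (hVdet : V.det = 1) (hΓdet : Γ.det = 1) :
    (V.toBlocks₂₂ - V.toBlocks₂₁ * (V.toBlocks₁₁ + Γ)⁻¹ * V.toBlocks₁₂).det = 1 ∧
    (((V.toBlocks₂₂ - V.toBlocks₂₁ * (V.toBlocks₁₁ + Γ)⁻¹ * V.toBlocks₁₂).map Complex.ofReal)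
      - Complex.I • (Omg b).map Complex.ofReal).PosSemidef := by
  have hJt : (fromBlocks (Omg a) 0 0 (Omg b))ᵀ = -fromBlocks (Omg a) 0 0 (Omg b) := by
    simp [fromBlocks_transpose, Omg_transpose, fromBlocks_neg]
  have hVsymp := mul_mul_eq_of_isSymm_of_det_eq_one hVs hJt
    (fromBlocks_zero_zero_mul_self (Omg_mul_self a) (Omg_mul_self b)) hVdet hV
  have hΓsymp := mul_mul_eq_of_isSymm_of_det_eq_one hΓs (Omg_transpose a) (Omg_mul_self a) hΓdet hΓ
  have hA : ((V.toBlocks₁₁ + Γ).map Complex.ofReal).PosDef := by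
    have hVpd : (V.map Complex.ofReal).PosDef :=
      (posSemidef_map_ofReal_of_sub hVs hJt hV).posDef_iff_det_ne_zero.mpr
        (by simp [det_map_ofReal, hVdet])
    rw [Matrix.map_add _ Complex.ofReal_add]
    exact (hVpd.submatrix Sum.inl_injective).add_posSemidef
      (posSemidef_map_ofReal_of_sub hΓs (Omg_transpose a) hΓ)
  refine ⟨det_schur_complement_eq_one (Omg_mul_self a) (Omg_mul_self b) hVsymp hΓsymp hVdet hΓdet
    (by simpa [det_map_ofReal] using hA.det_pos.ne'), posSemidef_schur_complement_map_ofReal hV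
    (posSemidef_map_ofReal_add_of_sub hΓs (Omg_transpose a) hΓ) hA⟩
end

section
/- Let V be a 2m × 2m quantum covariance matrix in xp-form, V = [[Q, 0],[0, P]] with respect to the xp block partition. Then there exists an invertible m × m real matrix M such that the symplectic matrix S = [[M^{-1}, 0],[0, M^T]] brings V into Williamson form: S V S^T = [[D, 0],[0, D]] with D diagonal positive. -/
/-!
Write `Q = N Nᵀ` with `N` invertible (e.g. `N = √Q`) and diagonalize the positive definite matrix
`Nᵀ P N = U Λ Uᵀ` with `U` orthogonal. Replacing `N` by `N U` keeps `Q = N Nᵀ` and makes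
`Nᵀ P N = Λ`. The two congruences `M⁻¹ Q M⁻ᵀ` and `Mᵀ P M` scale in opposite directions under
`M = N C` with `C` diagonal, so `C = Λ^{-1/4}` balances them: both become `D = Λ^{1/2}`.
-/

open Matrix ComplexOrder

namespace Matrix

variable {n : Type*} [Fintype n]

theorem fromBlocks_zero_zero_mul_mul_transpose {m R : Type*} [Fintype m] [Semiring R]
    (A Q : Matrix m m R) (B P : Matrix n n R) :
    fromBlocks A 0 0 B * fromBlocks Q 0 0 P * (fromBlocks A 0 0 B)ᵀ =
      fromBlocks (A * Q * Aᵀ) 0 0 (B * P * Bᵀ) := by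
  simp [fromBlocks_transpose, fromBlocks_multiply]

variable [DecidableEq n]

open scoped MatrixOrder in
theorem PosDef.exists_isUnit_eq_mul_transpose {Q : Matrix n n ℝ} (hQ : Q.PosDef) :
    ∃ B : Matrix n n ℝ, IsUnit B ∧ Q = B * Bᵀ := by
  have hQ0 : 0 ≤ Q := hQ.posSemidef.nonneg
  refine ⟨CFC.sqrt Q, (CFC.isUnit_sqrt_iff Q).mpr hQ.isUnit, ?_⟩
  have hsymm : (CFC.sqrt Q)ᵀ = CFC.sqrt Q := by
    rw [← conjTranspose_eq_transpose_of_trivial]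
    exact (CFC.sqrt_nonneg Q).isSelfAdjoint
  rw [hsymm, CFC.sqrt_mul_sqrt_self Q]

theorem PosDef.exists_orthogonal_transpose_mul_mul_eq_diagonal {A : Matrix n n ℝ}
    (hA : A.PosDef) :
    ∃ U ∈ orthogonalGroup n ℝ, ∃ l : n → ℝ, (∀ i, 0 < l i) ∧ Uᵀ * A * U = diagonal l := by
  refine ⟨hA.1.eigenvectorUnitary, hA.1.eigenvectorUnitary.2, hA.1.eigenvalues,
    hA.eigenvalues_pos, ?_⟩
  simpa [star_eq_conjTranspose, conjTranspose_eq_transpose_of_trivial] using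
    hA.1.conjStarAlgAut_star_eigenvectorUnitary

theorem PosDef.exists_simultaneous_diagonalization {Q P : Matrix n n ℝ} (hQ : Q.PosDef)
    (hP : P.PosDef) :
    ∃ N : Matrix n n ℝ, IsUnit N ∧ Q = N * Nᵀ ∧
      ∃ l : n → ℝ, (∀ i, 0 < l i) ∧ Nᵀ * P * N = diagonal l := by
  obtain ⟨B, hB, rfl⟩ := hQ.exists_isUnit_eq_mul_transpose
  have hBPB : (Bᵀ * P * B).PosDef := by
    simpa [conjTranspose_eq_transpose_of_trivial] using
      hP.conjTranspose_mul_mul_same (mulVec_injective_of_isUnit hB)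
  obtain ⟨U, hU, l, hl, hdiag⟩ := hBPB.exists_orthogonal_transpose_mul_mul_eq_diagonal
  refine ⟨B * U, hB.mul (Unitary.isUnit_coe (U := ⟨U, hU⟩)), ?_, l, hl, ?_⟩
  · rw [transpose_mul, Matrix.mul_assoc, ← Matrix.mul_assoc U,
      (mem_orthogonalGroup_iff n ℝ).mp hU, Matrix.one_mul]
  · rw [← hdiag, transpose_mul]
    simp only [Matrix.mul_assoc]

theorem inv_mul_mul_transpose_inv_of_eq {R : Type*} [CommRing R] {M Q D : Matrix n n R}
    (hM : IsUnit M.det) (hQ : Q = M * D * Mᵀ) : M⁻¹ * Q * M⁻¹ᵀ = D := by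
  have hMt : IsUnit Mᵀ.det := by rwa [det_transpose]
  rw [hQ, transpose_nonsing_inv]
  simp only [Matrix.mul_assoc, mul_nonsing_inv _ hMt, Matrix.mul_one]
  rw [← Matrix.mul_assoc, nonsing_inv_mul _ hM, Matrix.one_mul]

theorem exists_balanced_diagonalization_of_eq_mul_transpose {Q P N : Matrix n n ℝ} {l : n → ℝ}
    (hl : ∀ i, 0 < l i) (hN : IsUnit N) (hQ : Q = N * Nᵀ) (hP : Nᵀ * P * N = diagonal l) :
    ∃ (M : Matrix n n ℝ) (d : n → ℝ), IsUnit M.det ∧ (∀ i, 0 < d i) ∧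
      M⁻¹ * Q * M⁻¹ᵀ = diagonal d ∧ Mᵀ * P * M = diagonal d := by
  set d : n → ℝ := fun i => √(l i)
  set c : n → ℝ := fun i => (√(d i))⁻¹
  have hd : ∀ i, 0 < d i := fun i => Real.sqrt_pos.mpr (hl i)
  have hcc : ∀ i, c i * c i = (d i)⁻¹ := fun i => by
    rw [← mul_inv, Real.mul_self_sqrt (hd i).le]
  have hl_eq : ∀ i, l i = d i * d i := fun i => (Real.mul_self_sqrt (hl i).le).symm
  have hcdc : (fun i => c i * d i * c i) = 1 := funext fun i => by
    rw [mul_right_comm, hcc, inv_mul_cancel₀ (hd i).ne', Pi.one_apply]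
  have hclc : (fun i => c i * l i * c i) = d := funext fun i => by
    rw [mul_right_comm, hcc, hl_eq, ← mul_assoc, inv_mul_cancel₀ (hd i).ne', one_mul]
  have hM : IsUnit (N * diagonal c).det := by
    rw [det_mul, det_diagonal]
    exact ((isUnit_iff_isUnit_det N).mp hN).mul
      (Finset.prod_ne_zero_iff.mpr fun i _ => inv_ne_zero (Real.sqrt_pos.mpr (hd i)).ne').isUnit
  refine ⟨N * diagonal c, d, hM, hd, inv_mul_mul_transpose_inv_of_eq hM ?_, ?_⟩
  · calc Q = N * diagonal (fun i => c i * d i * c i) * Nᵀ := by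
          rw [hQ, hcdc, Pi.one_def, diagonal_one, Matrix.mul_one]
      _ = N * diagonal c * diagonal d * (N * diagonal c)ᵀ := by
          simp only [transpose_mul, diagonal_transpose, ← diagonal_mul_diagonal, Matrix.mul_assoc]
  · calc (N * diagonal c)ᵀ * P * (N * diagonal c) = diagonal c * (Nᵀ * P * N) * diagonal c := by
          simp only [transpose_mul, diagonal_transpose, Matrix.mul_assoc]
      _ = diagonal d := by rw [hP, diagonal_mul_diagonal, diagonal_mul_diagonal, hclc]

end Matrix

theorem xp_form_williamson_general {m : ℕ}
    (Q P : Matrix (Fin m) (Fin m) ℝ) (hQ : Q.PosDef) (hP : P.PosDef) :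
    ∃ (M : Matrix (Fin m) (Fin m) ℝ) (d : Fin m → ℝ),
      IsUnit M.det ∧ (∀ i, 0 < d i) ∧
      (fromBlocks M⁻¹ 0 0 Mᵀ) * (fromBlocks Q 0 0 P) * (fromBlocks M⁻¹ 0 0 Mᵀ)ᵀ
        = fromBlocks (Matrix.diagonal d) 0 0 (Matrix.diagonal d) := by
  obtain ⟨N, hN, hQN, l, hl, hPN⟩ := hQ.exists_simultaneous_diagonalization hP
  obtain ⟨M, d, hM, hd, hMQ, hMP⟩ :=
    exists_balanced_diagonalization_of_eq_mul_transpose hl hN hQN hPN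
  refine ⟨M, d, hM, hd, ?_⟩
  rw [fromBlocks_zero_zero_mul_mul_transpose, hMQ, transpose_transpose, hMP]

/-- A QCM in xp-form `V = [[Q,0],[0,P]]` (with `Q, P` positive definite) can be brought
into Williamson form by a symplectic matrix of the form `S = [[M⁻¹,0],[0,Mᵀ]]`:
`S V Sᵀ = [[D,0],[0,D]]` with `D` diagonal positive. -/
theorem xp_form_williamson {m : ℕ}
    (Q P : Matrix (Fin m) (Fin m) ℝ) (hQ : Q.PosDef) (hP : P.PosDef)
    (hQCM : (((fromBlocks Q 0 0 P : Matrix (Fin m ⊕ Fin m) (Fin m ⊕ Fin m) ℝ).map Complex.ofReal)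
      - Complex.I • (Omg m).map Complex.ofReal).PosSemidef) :
    ∃ (M : Matrix (Fin m) (Fin m) ℝ) (d : Fin m → ℝ),
      IsUnit M.det ∧ (∀ i, 0 < d i) ∧
      (fromBlocks M⁻¹ 0 0 Mᵀ) * (fromBlocks Q 0 0 P) * (fromBlocks M⁻¹ 0 0 Mᵀ)ᵀ
        = fromBlocks (Matrix.diagonal d) 0 0 (Matrix.diagonal d) :=
  xp_form_williamson_general Q P hQ hP
end

section
/- Let γ_AB be a pure bipartite quantum covariance matrix in xp-form, γ_AB = [[Q, 0],[0, Q^{-1}]]. Then I_M(A_x:B_x)_{γ_AB^x} = I_M(A_p:B_p)_{γ_AB^p} = (1/2) I_M(A:B)_{γ_AB} = M(γ_A), where M(X) := (1/2) log₂ det X. -/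
/-
Reorder the coordinates of `γ` as `(x_A, x_B, p_A, p_B)`. Then `γ` is the block diagonal matrix
`diag(Q, Q⁻¹)`, i.e. the sum of the two uncorrelated bipartite systems `A_x B_x` and `A_p B_p`, and
the log-determinant mutual information is additive over such sums:
`I_M(A:B)_γ = I_M(Q) + I_M(Q⁻¹)`. Jacobi's complementary minor identity
`det (Q⁻¹)₁₁ = det Q₂₂ / det Q` gives `I_M(Q⁻¹) = I_M(Q)`, and the reduced block
`γ_A = diag(Q₁₁, (Q⁻¹)₁₁)` has determinant `det Q₁₁ det Q₂₂ / det Q`, whose halved logarithm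
is `I_M(Q)` by definition.
-/

open Matrix

/-- The log-determinant mutual information of a bipartite positive matrix. -/
noncomputable def IM {α β : Type*} [Fintype α] [Fintype β] [DecidableEq α] [DecidableEq β]
    (W : Matrix (α ⊕ β) (α ⊕ β) ℝ) : ℝ :=
  (1/2) * Real.logb 2 ((W.toBlocks₁₁.det * W.toBlocks₂₂.det) / W.det)

namespace Matrix

variable {m n R : Type*} [Fintype m] [Fintype n] [DecidableEq m] [DecidableEq n] [CommRing R]

theorem det_mul_det_inv_toBlocks₂₂ {Q : Matrix (m ⊕ n) (m ⊕ n) R} (hQ : IsUnit Q.det) :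
    Q.det * (Q⁻¹).toBlocks₂₂.det = Q.toBlocks₁₁.det := by
  set P := Q⁻¹
  have hQP : Q * P = 1 := Q.mul_nonsing_inv hQ
  rw [← fromBlocks_toBlocks Q, ← fromBlocks_toBlocks P, fromBlocks_multiply, ← fromBlocks_one,
    fromBlocks_inj] at hQP
  obtain ⟨-, h₁₂, -, h₂₂⟩ := hQP
  have key : Q * fromBlocks 1 P.toBlocks₁₂ 0 P.toBlocks₂₂ =
      fromBlocks Q.toBlocks₁₁ 0 Q.toBlocks₂₁ 1 := by
    conv_lhs => rw [← fromBlocks_toBlocks Q]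
    rw [fromBlocks_multiply, h₁₂, h₂₂]
    simp
  simpa [det_fromBlocks_zero₂₁, det_fromBlocks_zero₁₂] using congrArg det key

theorem det_mul_det_inv_toBlocks₁₁ {Q : Matrix (m ⊕ n) (m ⊕ n) R} (hQ : IsUnit Q.det) :
    Q.det * (Q⁻¹).toBlocks₁₁.det = Q.toBlocks₂₂.det := by
  have hswap : IsUnit (Q.submatrix Sum.swap Sum.swap).det := by
    simpa [← Equiv.sumComm_apply, det_submatrix_equiv_self] using hQ
  have := det_mul_det_inv_toBlocks₂₂ hswap
  rwa [← Equiv.sumComm_apply, inv_submatrix_equiv, det_submatrix_equiv_self] at this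

theorem det_inv_toBlocks₁₁ {K : Type*} [Field K] {Q : Matrix (m ⊕ n) (m ⊕ n) K}
    (hQ : Q.det ≠ 0) : (Q⁻¹).toBlocks₁₁.det = Q.toBlocks₂₂.det / Q.det :=
  eq_div_of_mul_eq hQ ((mul_comm _ _).trans (det_mul_det_inv_toBlocks₁₁ hQ.isUnit))

theorem det_inv_toBlocks₂₂ {K : Type*} [Field K] {Q : Matrix (m ⊕ n) (m ⊕ n) K}
    (hQ : Q.det ≠ 0) : (Q⁻¹).toBlocks₂₂.det = Q.toBlocks₁₁.det / Q.det :=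
  eq_div_of_mul_eq hQ ((mul_comm _ _).trans (det_mul_det_inv_toBlocks₂₂ hQ.isUnit))

end Matrix

section MutualInformation

variable {α β α' β' R : Type*}

/-- The joint covariance matrix of two uncorrelated bipartite systems `A₁B₁` and `A₂B₂`,
as a bipartite system `(A₁A₂)(B₁B₂)`. -/
def bipartiteSum [Zero R] (X : Matrix (α ⊕ β) (α ⊕ β) R) (Y : Matrix (α' ⊕ β') (α' ⊕ β') R) :
    Matrix ((α ⊕ α') ⊕ (β ⊕ β')) ((α ⊕ α') ⊕ (β ⊕ β')) R :=
  reindex (Equiv.sumSumSumComm α β α' β') (Equiv.sumSumSumComm α β α' β') (fromBlocks X 0 0 Y)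

section Blocks

variable [Zero R] {X : Matrix (α ⊕ β) (α ⊕ β) R} {Y : Matrix (α' ⊕ β') (α' ⊕ β') R}

theorem toBlocks₁₁_bipartiteSum :
    (bipartiteSum X Y).toBlocks₁₁ = fromBlocks X.toBlocks₁₁ 0 0 Y.toBlocks₁₁ := by
  ext (i | i) (j | j) <;> rfl

theorem toBlocks₂₂_bipartiteSum :
    (bipartiteSum X Y).toBlocks₂₂ = fromBlocks X.toBlocks₂₂ 0 0 Y.toBlocks₂₂ := by
  ext (i | i) (j | j) <;> rfl

theorem eq_bipartiteSum_of_submatrix_eq {γ : Matrix ((α ⊕ α') ⊕ (β ⊕ β')) ((α ⊕ α') ⊕ (β ⊕ β')) R}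
    (h₁ : γ.submatrix (Sum.map Sum.inl Sum.inl) (Sum.map Sum.inl Sum.inl) = X)
    (h₂ : γ.submatrix (Sum.map Sum.inr Sum.inr) (Sum.map Sum.inr Sum.inr) = Y)
    (h₁₂ : γ.submatrix (Sum.map Sum.inl Sum.inl) (Sum.map Sum.inr Sum.inr) = 0)
    (h₂₁ : γ.submatrix (Sum.map Sum.inr Sum.inr) (Sum.map Sum.inl Sum.inl) = 0) :
    γ = bipartiteSum X Y := by
  set e := Equiv.sumSumSumComm α β α' β'
  have he₁ : e ∘ Sum.inl = Sum.map Sum.inl Sum.inl := by funext i; cases i <;> rfl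
  have he₂ : e ∘ Sum.inr = Sum.map Sum.inr Sum.inr := by funext i; cases i <;> rfl
  have hblocks : γ.submatrix e e = fromBlocks X 0 0 Y := by
    rw [← fromBlocks_toBlocks (γ.submatrix e e)]
    change fromBlocks (γ.submatrix (e ∘ Sum.inl) (e ∘ Sum.inl))
      (γ.submatrix (e ∘ Sum.inl) (e ∘ Sum.inr)) (γ.submatrix (e ∘ Sum.inr) (e ∘ Sum.inl))
      (γ.submatrix (e ∘ Sum.inr) (e ∘ Sum.inr)) = _
    rw [he₁, he₂, h₁, h₂, h₁₂, h₂₁]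
  rw [bipartiteSum, ← hblocks, reindex_apply, submatrix_submatrix, Equiv.self_comp_symm,
    submatrix_id_id]

end Blocks

variable [Fintype α] [Fintype β] [Fintype α'] [Fintype β']
  [DecidableEq α] [DecidableEq β] [DecidableEq α'] [DecidableEq β']

theorem det_bipartiteSum [CommRing R] (X : Matrix (α ⊕ β) (α ⊕ β) R)
    (Y : Matrix (α' ⊕ β') (α' ⊕ β') R) : (bipartiteSum X Y).det = X.det * Y.det := by
  rw [bipartiteSum, det_reindex_self, det_fromBlocks_zero₁₂]

theorem Matrix.PosDef.det_toBlocks_div_det_pos {X : Matrix (α ⊕ β) (α ⊕ β) ℝ} (hX : X.PosDef) :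
    0 < X.toBlocks₁₁.det * X.toBlocks₂₂.det / X.det :=
  div_pos (mul_pos (hX.submatrix Sum.inl_injective).det_pos
    (hX.submatrix Sum.inr_injective).det_pos) hX.det_pos

theorem IM_inv {Q : Matrix (α ⊕ β) (α ⊕ β) ℝ} (hQ : Q.det ≠ 0) : IM Q⁻¹ = IM Q := by
  unfold IM
  rw [det_inv_toBlocks₁₁ hQ, det_inv_toBlocks₂₂ hQ, det_nonsing_inv, Ring.inverse_eq_inv']
  congr 2
  field_simp

theorem IM_bipartiteSum {X : Matrix (α ⊕ β) (α ⊕ β) ℝ} {Y : Matrix (α' ⊕ β') (α' ⊕ β') ℝ}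
    (hX : X.PosDef) (hY : Y.PosDef) : IM (bipartiteSum X Y) = IM X + IM Y := by
  unfold IM
  rw [toBlocks₁₁_bipartiteSum, toBlocks₂₂_bipartiteSum, det_bipartiteSum, det_fromBlocks_zero₁₂,
    det_fromBlocks_zero₁₂, ← mul_add, ← Real.logb_mul hX.det_toBlocks_div_det_pos.ne'
    hY.det_toBlocks_div_det_pos.ne']
  congr 2
  ring

end MutualInformation

/-- For a pure bipartite QCM `γ_AB` in xp-form, i.e. whose x-part is `Q`, whose p-part is
`Q⁻¹` and whose xp cross blocks vanish, one has
`I_M(A_x:B_x)_{γ^x} = I_M(A_p:B_p)_{γ^p} = (1/2) I_M(A:B)_γ = M(γ_A) = (1/2) log₂ det γ_A`. -/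
theorem pure_xp_IM {a b : ℕ}
    (γ : Matrix ((Fin a ⊕ Fin a) ⊕ (Fin b ⊕ Fin b)) ((Fin a ⊕ Fin a) ⊕ (Fin b ⊕ Fin b)) ℝ)
    (Q : Matrix (Fin a ⊕ Fin b) (Fin a ⊕ Fin b) ℝ) (hQ : Q.PosDef)
    (hx : γ.submatrix (Sum.map Sum.inl Sum.inl : Fin a ⊕ Fin b → (Fin a ⊕ Fin a) ⊕ (Fin b ⊕ Fin b))
            (Sum.map Sum.inl Sum.inl) = Q)
    (hp : γ.submatrix (Sum.map Sum.inr Sum.inr : Fin a ⊕ Fin b → (Fin a ⊕ Fin a) ⊕ (Fin b ⊕ Fin b))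
            (Sum.map Sum.inr Sum.inr) = Q⁻¹)
    (hxp : γ.submatrix (Sum.map Sum.inl Sum.inl : Fin a ⊕ Fin b → (Fin a ⊕ Fin a) ⊕ (Fin b ⊕ Fin b))
            (Sum.map Sum.inr Sum.inr : Fin a ⊕ Fin b → (Fin a ⊕ Fin a) ⊕ (Fin b ⊕ Fin b)) = 0)
    (hpx : γ.submatrix (Sum.map Sum.inr Sum.inr : Fin a ⊕ Fin b → (Fin a ⊕ Fin a) ⊕ (Fin b ⊕ Fin b))
            (Sum.map Sum.inl Sum.inl : Fin a ⊕ Fin b → (Fin a ⊕ Fin a) ⊕ (Fin b ⊕ Fin b)) = 0) :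
    IM Q = IM Q⁻¹ ∧
    IM Q = (1/2) * IM γ ∧
    IM Q = (1/2) * Real.logb 2 γ.toBlocks₁₁.det := by
  obtain rfl : γ = bipartiteSum Q Q⁻¹ := eq_bipartiteSum_of_submatrix_eq hx hp hxp hpx
  have hdet : Q.det ≠ 0 := hQ.det_pos.ne'
  have hinv : IM Q⁻¹ = IM Q := IM_inv hdet
  refine ⟨hinv.symm, ?_, ?_⟩
  · rw [IM_bipartiteSum hQ hQ.inv, hinv]
    ring
  · rw [toBlocks₁₁_bipartiteSum, det_fromBlocks_zero₁₂, det_inv_toBlocks₁₁ hdet, ← mul_div_assoc,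
      IM]
end

section
/- For any two matrices M, N ≥ κ^{-1} I (positive definite with smallest eigenvalue at least κ^{-1}, κ ≥ 1), it holds that |log₂ det(M) − log₂ det(N)| ≤ κ log₂(e) ‖M − N‖₁. -/
open Matrix Classical

/-- The trace norm of a (Hermitian) real matrix: the sum of the absolute values of its
eigenvalues. -/
noncomputable def traceNorm {n : Type*} [Fintype n] [DecidableEq n]
    (A : Matrix n n ℝ) : ℝ :=
  if h : A.IsHermitian then ∑ i, |h.eigenvalues i| else 0

/-!
For `A, B ≥ c • 1`, concavity of `log det` gives
`log det A - log det B ≤ tr (B⁻¹ (A - B))`, proved by congruence with `B^{-1/2}` and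
`log λ ≤ λ - 1` on the eigenvalues. Since `0 ≤ B⁻¹ ≤ c⁻¹ • 1`, the right-hand side is at most
`c⁻¹ ‖A - B‖₁`, as seen in an eigenbasis of `A - B`. Exchanging `A` and `B` gives the bound on
`|log det A - log det B|`.
-/

open scoped MatrixOrder

namespace Matrix

variable {n : Type*} [DecidableEq n]

lemma posDef_of_smul_one_le {c : ℝ} (hc : 0 < c) {A : Matrix n n ℝ} (hA : c • 1 ≤ A) :
    A.PosDef := by
  simpa using PosDef.posSemidef_add (le_iff.mp hA) (PosDef.one.smul hc)

variable [Fintype n]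

lemma inv_le_of_smul_one_le {c : ℝ} (hc : 0 < c) {A : Matrix n n ℝ} (hA : c • 1 ≤ A) :
    A⁻¹ ≤ c⁻¹ • 1 := by
  have hApd := posDef_of_smul_one_le hc hA
  rw [← Algebra.algebraMap_eq_smul_one,
    le_algebraMap_iff_spectrum_le hApd.inv.isHermitian.isSelfAdjoint]
  rw [← Algebra.algebraMap_eq_smul_one,
    algebraMap_le_iff_le_spectrum hApd.isHermitian.isSelfAdjoint] at hA
  intro x hx
  rw [← hApd.isUnit.unit_spec, ← coe_units_inv, ← spectrum.map_inv] at hx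
  simpa using inv_anti₀ hc (hA _ hx)

lemma IsHermitian.trace_mul_eq_sum_eigenvalues_mul {C : Matrix n n ℝ} (hC : C.IsHermitian)
    (X : Matrix n n ℝ) :
    (X * C).trace = ∑ i, hC.eigenvalues i *
      (star (hC.eigenvectorUnitary : Matrix n n ℝ) * X * hC.eigenvectorUnitary) i i := by
  conv_lhs => rw [hC.spectral_theorem, Unitary.conjStarAlgAut_apply]
  rw [← Matrix.mul_assoc, ← Matrix.mul_assoc, trace_mul_cycle]
  simp only [← Matrix.mul_assoc]
  simp [trace, mul_comm]

lemma diag_star_mul_mul_le {κ : ℝ} {X : Matrix n n ℝ} (hX : X ≤ κ • 1)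
    (U : unitary (Matrix n n ℝ)) (i : n) :
    (star (U : Matrix n n ℝ) * X * U) i i ≤ κ := by
  have h := ((le_iff.mp hX).conjTranspose_mul_mul_same (U : Matrix n n ℝ)).diag_nonneg (i := i)
  rw [Matrix.mul_sub, Matrix.sub_mul, Matrix.mul_smul, Matrix.smul_mul, Matrix.mul_one,
    ← star_eq_conjTranspose, Unitary.coe_star_mul_self] at h
  simpa using h

lemma abs_trace_mul_le {κ : ℝ} {X C : Matrix n n ℝ} (hX₀ : 0 ≤ X) (hX : X ≤ κ • 1)
    (hC : C.IsHermitian) :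
    |(X * C).trace| ≤ κ * ∑ i, |hC.eigenvalues i| := by
  rw [hC.trace_mul_eq_sum_eigenvalues_mul, Finset.mul_sum]
  refine (Finset.abs_sum_le_sum_abs _ _).trans (Finset.sum_le_sum fun i _ => ?_)
  set U := hC.eigenvectorUnitary
  have hdiag_nonneg : 0 ≤ (star (U : Matrix n n ℝ) * X * U) i i :=
    ((nonneg_iff_posSemidef.mp hX₀).conjTranspose_mul_mul_same (U : Matrix n n ℝ)).diag_nonneg
  rw [abs_mul, abs_of_nonneg hdiag_nonneg, mul_comm]
  exact mul_le_mul_of_nonneg_right (diag_star_mul_mul_le hX U i) (abs_nonneg _)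

lemma PosDef.log_det_le_trace_sub_card {A : Matrix n n ℝ} (hA : A.PosDef) :
    Real.log A.det ≤ A.trace - Fintype.card n := by
  rw [hA.isHermitian.det_eq_prod_eigenvalues, hA.isHermitian.trace_eq_sum_eigenvalues]
  simp only [RCLike.ofReal_real_eq_id, id_eq]
  rw [Real.log_prod fun i _ => (hA.eigenvalues_pos i).ne', ← Finset.card_univ,
    Finset.cast_card, ← Finset.sum_sub_distrib]
  exact Finset.sum_le_sum fun i _ => Real.log_le_sub_one_of_pos (hA.eigenvalues_pos i)

lemma PosDef.log_det_sub_log_det_le {A B : Matrix n n ℝ} (hA : A.PosDef) (hB : B.PosDef) :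
    Real.log A.det - Real.log B.det ≤ (B⁻¹ * (A - B)).trace := by
  set S := CFC.sqrt B
  have hSS : S * S = B := CFC.sqrt_mul_sqrt_self B hB.posSemidef.nonneg
  have hSH : S.IsHermitian := (CFC.sqrt_nonneg B).posSemidef.isHermitian
  have hSunit : IsUnit S := isUnit_of_mul_isUnit_left (hSS ▸ hB.isUnit)
  have hC : (S⁻¹ * A * S⁻¹).PosDef := by
    have := (IsUnit.posDef_star_left_conjugate_iff (isUnit_nonsing_inv_iff.mpr hSunit)).mpr hA
    rwa [star_eq_conjTranspose, hSH.inv.eq] at this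
  have hdet : (S⁻¹ * A * S⁻¹).det = A.det / B.det := by
    rw [det_mul, det_mul, det_nonsing_inv, Ring.inverse_eq_inv', ← hSS, det_mul]
    field_simp
  have htr : (S⁻¹ * A * S⁻¹).trace = (B⁻¹ * A).trace := by
    rw [trace_mul_cycle, ← hSS, mul_inv_rev]
  calc Real.log A.det - Real.log B.det = Real.log (S⁻¹ * A * S⁻¹).det := by
        rw [hdet, Real.log_div hA.det_pos.ne' hB.det_pos.ne']
    _ ≤ (S⁻¹ * A * S⁻¹).trace - Fintype.card n := hC.log_det_le_trace_sub_card
    _ = (B⁻¹ * (A - B)).trace := by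
        rw [htr, Matrix.mul_sub, nonsing_inv_mul _ hB.det_pos.ne'.isUnit, trace_sub, trace_one]

lemma abs_log_det_sub_log_det_le {c : ℝ} (hc : 0 < c) {A B : Matrix n n ℝ}
    (hA : c • 1 ≤ A) (hB : c • 1 ≤ B) :
    |Real.log A.det - Real.log B.det| ≤ c⁻¹ * traceNorm (A - B) := by
  have hApd := posDef_of_smul_one_le hc hA
  have hBpd := posDef_of_smul_one_le hc hB
  have hAB : (A - B).IsHermitian := hApd.isHermitian.sub hBpd.isHermitian
  have dual {X : Matrix n n ℝ} (hX : c • 1 ≤ X) :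
      |(X⁻¹ * (A - B)).trace| ≤ c⁻¹ * ∑ i, |hAB.eigenvalues i| :=
    abs_trace_mul_le (posDef_of_smul_one_le hc hX).inv.posSemidef.nonneg
      (inv_le_of_smul_one_le hc hX) hAB
  rw [traceNorm, dif_pos hAB, abs_sub_le_iff]
  constructor
  · calc Real.log A.det - Real.log B.det ≤ (B⁻¹ * (A - B)).trace :=
          hApd.log_det_sub_log_det_le hBpd
      _ ≤ c⁻¹ * ∑ i, |hAB.eigenvalues i| := (le_abs_self _).trans (dual hB)
  · calc Real.log B.det - Real.log A.det ≤ (A⁻¹ * (B - A)).trace :=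
          hBpd.log_det_sub_log_det_le hApd
      _ = -(A⁻¹ * (A - B)).trace := by rw [← trace_neg, ← Matrix.mul_neg, neg_sub]
      _ ≤ c⁻¹ * ∑ i, |hAB.eigenvalues i| := (neg_le_abs _).trans (dual hA)

end Matrix

theorem logdet_lipschitz_general {n : Type*} [Fintype n] [DecidableEq n]
    (κ : ℝ) (hκ : 1 ≤ κ)
    (M N : Matrix n n ℝ)
    (hM : (M - κ⁻¹ • (1 : Matrix n n ℝ)).PosSemidef)
    (hN : (N - κ⁻¹ • (1 : Matrix n n ℝ)).PosSemidef) :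
    |Real.logb 2 M.det - Real.logb 2 N.det| ≤ κ * Real.logb 2 (Real.exp 1) * traceNorm (M - N) := by
  have hlog2 : 0 < Real.log 2 := Real.log_pos one_lt_two
  -- `hM` and `hN` are `κ⁻¹ • 1 ≤ M` and `κ⁻¹ • 1 ≤ N` by definition of the Loewner order.
  have hlog := abs_log_det_sub_log_det_le (inv_pos.mpr (zero_lt_one.trans_le hκ)) hM hN
  rw [inv_inv] at hlog
  calc |Real.logb 2 M.det - Real.logb 2 N.det|
        = |Real.log M.det - Real.log N.det| / Real.log 2 := by
        rw [Real.logb, Real.logb, ← sub_div, abs_div, abs_of_pos hlog2]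
    _ ≤ κ * traceNorm (M - N) / Real.log 2 := by gcongr
    _ = κ * Real.logb 2 (Real.exp 1) * traceNorm (M - N) := by
        rw [Real.logb, Real.log_exp]
        ring

/-- For real symmetric `M, N ≥ κ⁻¹ 1` with `κ ≥ 1`,
`|log₂ det M − log₂ det N| ≤ κ log₂(e) ‖M − N‖₁`. -/
theorem logdet_lipschitz {n : Type*} [Fintype n] [DecidableEq n]
    (κ : ℝ) (hκ : 1 ≤ κ)
    (M N : Matrix n n ℝ) (hMs : M.IsSymm) (hNs : N.IsSymm)
    (hM : (M - κ⁻¹ • (1 : Matrix n n ℝ)).PosSemidef)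
    (hN : (N - κ⁻¹ • (1 : Matrix n n ℝ)).PosSemidef) :
    |Real.logb 2 M.det - Real.logb 2 N.det| ≤ κ * Real.logb 2 (Real.exp 1) * traceNorm (M - N) :=
  logdet_lipschitz_general κ hκ M N hM hN
end

section
/- Let Γ_A(t), Γ_B(t) be homodyne seeds diag(t·1_x, t^{-1}·1_p), and let 𝒲_AB be a compact set of bipartite QCMs with W ≥ κ^{-1} I for all W ∈ 𝒲_AB (some 0 < κ ≤ 1). Then lim_{t→0⁺} inf_{W ∈ 𝒲_AB} I_M(A:B)_{W + Γ_A(t) ⊕ Γ_B(t)} = inf_{W ∈ 𝒲_AB} I_M(A_x:B_x)_{W^x}, where W^x is the x-principal submatrix of W. -/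
open Matrix ComplexOrder

/-- The homodyne seed `Γ(t) = diag(t·1_x, t⁻¹·1_p)` on `m` modes. -/
noncomputable def seed (t : ℝ) (m : ℕ) : Matrix (Fin m ⊕ Fin m) (Fin m ⊕ Fin m) ℝ :=
  fromBlocks (t • 1) 0 0 (t⁻¹ • 1)

namespace HomodyneAux

/-- diag entries of the rescaling matrix `D(t)`: `1` on x-indices, `√t` on p-indices. -/
noncomputable def sv (t : ℝ) (a b : ℕ) : ((Fin a ⊕ Fin a) ⊕ (Fin b ⊕ Fin b)) → ℝ :=
  Sum.elim (Sum.elim (fun _ => 1) (fun _ => Real.sqrt t))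
           (Sum.elim (fun _ => 1) (fun _ => Real.sqrt t))

/-- diag entries of `E(t) = D(t) Γ(t) D(t)`: `t` on x-indices, `1` on p-indices. -/
noncomputable def ev (t : ℝ) (a b : ℕ) : ((Fin a ⊕ Fin a) ⊕ (Fin b ⊕ Fin b)) → ℝ :=
  Sum.elim (Sum.elim (fun _ => t) (fun _ => 1))
           (Sum.elim (fun _ => t) (fun _ => 1))

/-- `M t W = D(t) W D(t) + E(t)`. -/
noncomputable def M (t : ℝ) (a b : ℕ)
    (W : Matrix ((Fin a ⊕ Fin a) ⊕ (Fin b ⊕ Fin b)) ((Fin a ⊕ Fin a) ⊕ (Fin b ⊕ Fin b)) ℝ) :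
    Matrix ((Fin a ⊕ Fin a) ⊕ (Fin b ⊕ Fin b)) ((Fin a ⊕ Fin a) ⊕ (Fin b ⊕ Fin b)) ℝ :=
  Matrix.diagonal (sv t a b) * W * Matrix.diagonal (sv t a b) + Matrix.diagonal (ev t a b)

/-- `IM` is invariant under congruence by an invertible diagonal matrix. -/
lemma IM_diag_congr {α β : Type*} [Fintype α] [Fintype β] [DecidableEq α] [DecidableEq β]
    (f : α ⊕ β → ℝ) (hf : ∀ i, f i ≠ 0) (X : Matrix (α ⊕ β) (α ⊕ β) ℝ) :
    IM (Matrix.diagonal f * X * Matrix.diagonal f) = IM X := by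
  classical
  set g : α → ℝ := fun i => f (Sum.inl i) with hg
  set h : β → ℝ := fun j => f (Sum.inr j) with hh
  have hB1 : (Matrix.diagonal f * X * Matrix.diagonal f).toBlocks₁₁
      = Matrix.diagonal g * X.toBlocks₁₁ * Matrix.diagonal g := by
    ext i j
    simp [Matrix.toBlocks₁₁, Matrix.mul_diagonal, Matrix.diagonal_mul, hg]
  have hB2 : (Matrix.diagonal f * X * Matrix.diagonal f).toBlocks₂₂
      = Matrix.diagonal h * X.toBlocks₂₂ * Matrix.diagonal h := by
    ext i j
    simp [Matrix.toBlocks₂₂, Matrix.mul_diagonal, Matrix.diagonal_mul, hh]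
  have hu : (∏ i, g i) ≠ 0 := Finset.prod_ne_zero_iff.mpr fun i _ => hf _
  have hv : (∏ j, h j) ≠ 0 := Finset.prod_ne_zero_iff.mpr fun j _ => hf _
  have hdf : (Matrix.diagonal f).det = (∏ i, g i) * ∏ j, h j := by
    rw [Matrix.det_diagonal, Fintype.prod_sum_type]
  unfold IM
  congr 1
  rw [hB1, hB2, Matrix.det_mul, Matrix.det_mul, Matrix.det_mul, Matrix.det_mul,
    Matrix.det_mul, Matrix.det_mul, hdf, Matrix.det_diagonal, Matrix.det_diagonal]
  set u := ∏ i, g i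
  set v := ∏ j, h j
  set p := X.toBlocks₁₁.det
  set q := X.toBlocks₂₂.det
  set r := X.det
  have hc : u * v * (u * v) ≠ 0 := mul_ne_zero (mul_ne_zero hu hv) (mul_ne_zero hu hv)
  rw [show u * p * u * (v * q * v) = u * v * (u * v) * (p * q) by ring,
    show u * v * r * (u * v) = u * v * (u * v) * r by ring,
    mul_div_mul_left _ _ hc]

lemma fromBlocks_seed_eq_diagonal {a b : ℕ} (t : ℝ) :
    (fromBlocks (seed t a) 0 0 (seed t b) :
      Matrix ((Fin a ⊕ Fin a) ⊕ (Fin b ⊕ Fin b)) ((Fin a ⊕ Fin a) ⊕ (Fin b ⊕ Fin b)) ℝ)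
    = Matrix.diagonal
        (Sum.elim (Sum.elim (fun _ : Fin a => t) (fun _ : Fin a => t⁻¹))
                  (Sum.elim (fun _ : Fin b => t) (fun _ : Fin b => t⁻¹))) := by
  ext i j
  rcases i with (i | i) | (i | i) <;> rcases j with (j | j) | (j | j) <;>
    simp [seed, Matrix.fromBlocks, Matrix.diagonal_apply, Matrix.one_apply]

/-- For `t > 0`, `IM (W + Γ(t)) = IM (M t W)`. -/
lemma IM_seed_eq {a b : ℕ} {t : ℝ} (ht : 0 < t)
    (W : Matrix ((Fin a ⊕ Fin a) ⊕ (Fin b ⊕ Fin b)) ((Fin a ⊕ Fin a) ⊕ (Fin b ⊕ Fin b)) ℝ) :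
    IM (W + fromBlocks (seed t a) 0 0 (seed t b)) = IM (M t a b W) := by
  have hsv : ∀ i, sv t a b i ≠ 0 := by
    rintro ((i | i) | (i | i)) <;>
      simp [sv, Real.sqrt_ne_zero', ht, one_ne_zero]
  have key : Matrix.diagonal (sv t a b) * (W + fromBlocks (seed t a) 0 0 (seed t b)) *
      Matrix.diagonal (sv t a b) = M t a b W := by
    rw [fromBlocks_seed_eq_diagonal, Matrix.mul_add, Matrix.add_mul, M]
    congr 1
    rw [Matrix.diagonal_mul_diagonal, Matrix.diagonal_mul_diagonal]
    have hp : Real.sqrt t * t⁻¹ * Real.sqrt t = 1 := by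
      rw [mul_comm (Real.sqrt t) t⁻¹, mul_assoc, Real.mul_self_sqrt ht.le]
      exact inv_mul_cancel₀ ht.ne'
    refine congrArg Matrix.diagonal (funext fun i => ?_)
    rcases i with (i | i) | (i | i)
    · show (1 : ℝ) * t * 1 = t; ring
    · show Real.sqrt t * t⁻¹ * Real.sqrt t = 1; exact hp
    · show (1 : ℝ) * t * 1 = t; ring
    · show Real.sqrt t * t⁻¹ * Real.sqrt t = 1; exact hp
  rw [← key, IM_diag_congr _ hsv]

/-- The shuffle equivalence `(Ax ⊕ Bx) ⊕ (Ap ⊕ Bp) ≃ (Ax ⊕ Ap) ⊕ (Bx ⊕ Bp)`. -/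
def shuf (a b : ℕ) : ((Fin a ⊕ Fin b) ⊕ (Fin a ⊕ Fin b)) ≃ ((Fin a ⊕ Fin a) ⊕ (Fin b ⊕ Fin b))
    where
  toFun := Sum.elim (Sum.elim (fun i => Sum.inl (Sum.inl i)) (fun j => Sum.inr (Sum.inl j)))
                    (Sum.elim (fun i => Sum.inl (Sum.inr i)) (fun j => Sum.inr (Sum.inr j)))
  invFun := Sum.elim (Sum.elim (fun i => Sum.inl (Sum.inl i)) (fun i => Sum.inr (Sum.inl i)))
                     (Sum.elim (fun j => Sum.inl (Sum.inr j)) (fun j => Sum.inr (Sum.inr j)))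
  left_inv := by rintro ((i | j) | (i | j)) <;> rfl
  right_inv := by rintro ((i | i) | (j | j)) <;> rfl

section Zero

variable {a b : ℕ}
  (W : Matrix ((Fin a ⊕ Fin a) ⊕ (Fin b ⊕ Fin b)) ((Fin a ⊕ Fin a) ⊕ (Fin b ⊕ Fin b)) ℝ)

/-- x-principal submatrix. -/
noncomputable def Wx : Matrix (Fin a ⊕ Fin b) (Fin a ⊕ Fin b) ℝ :=
  W.submatrix (Sum.map Sum.inl Sum.inl) (Sum.map Sum.inl Sum.inl)

lemma M_zero_apply (i j : (Fin a ⊕ Fin a) ⊕ (Fin b ⊕ Fin b)) :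
    M 0 a b W i j = sv 0 a b i * W i j * sv 0 a b j + (if i = j then ev 0 a b i else 0) := by
  simp [M, Matrix.add_apply, Matrix.mul_diagonal, Matrix.diagonal_mul, Matrix.diagonal_apply]

lemma M_zero_submatrix :
    (M 0 a b W).submatrix (shuf a b) (shuf a b) = fromBlocks (Wx W) 0 0 1 := by
  ext i j
  rcases i with (i | i) | (i | i) <;> rcases j with (j | j) | (j | j) <;>
    simp [M_zero_apply, shuf, sv, ev, Wx, Matrix.fromBlocks, Matrix.one_apply, Real.sqrt_zero]

lemma M_zero_det : (M 0 a b W).det = (Wx W).det := by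
  rw [← Matrix.det_submatrix_equiv_self (shuf a b), M_zero_submatrix,
    Matrix.det_fromBlocks_zero₂₁, Matrix.det_one, mul_one]

lemma M_zero_blocks₁₁ :
    (M 0 a b W).toBlocks₁₁ = fromBlocks ((Wx W).toBlocks₁₁) 0 0 1 := by
  ext i j
  rcases i with i | i <;> rcases j with j | j <;>
    simp [M_zero_apply, Matrix.toBlocks₁₁, sv, ev, Wx, Matrix.fromBlocks, Matrix.one_apply,
      Real.sqrt_zero]

lemma M_zero_blocks₂₂ :
    (M 0 a b W).toBlocks₂₂ = fromBlocks ((Wx W).toBlocks₂₂) 0 0 1 := by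
  ext i j
  rcases i with i | i <;> rcases j with j | j <;>
    simp [M_zero_apply, Matrix.toBlocks₂₂, sv, ev, Wx, Matrix.fromBlocks, Matrix.one_apply,
      Real.sqrt_zero]

/-- At `t = 0`, `IM (M 0 W) = IM (Wˣ)`. -/
lemma IM_M_zero : IM (M 0 a b W) = IM (Wx W) := by
  unfold IM
  rw [M_zero_det, M_zero_blocks₁₁, M_zero_blocks₂₂]
  simp [Matrix.det_fromBlocks_zero₂₁]

end Zero

section Pos

variable {a b : ℕ} {κ : ℝ}
  {W : Matrix ((Fin a ⊕ Fin a) ⊕ (Fin b ⊕ Fin b)) ((Fin a ⊕ Fin a) ⊕ (Fin b ⊕ Fin b)) ℝ}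

lemma M_sub_one_posSemidef (hκ : 1 ≤ κ⁻¹) {t : ℝ} (ht : 0 ≤ t)
    (hW : (W - κ⁻¹ • (1 : Matrix _ _ ℝ)).PosSemidef) :
    (M t a b W - 1).PosSemidef := by
  have key : M t a b W - 1
      = (Matrix.diagonal (sv t a b))ᴴ * (W - κ⁻¹ • 1) * Matrix.diagonal (sv t a b)
        + Matrix.diagonal (fun i => κ⁻¹ * (sv t a b i * sv t a b i) + ev t a b i - 1) := by
    have hst : (Matrix.diagonal (sv t a b))ᴴ = Matrix.diagonal (sv t a b) := by
      ext i j
      simp [Matrix.conjTranspose_apply, Matrix.diagonal_apply]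
      aesop
    rw [hst]
    ext i j
    by_cases hij : i = j
    · subst hij
      simp [M, Matrix.sub_apply, Matrix.add_apply, Matrix.mul_diagonal, Matrix.diagonal_mul,
        Matrix.diagonal_apply, Matrix.one_apply, Matrix.smul_apply]
      try ring
    · simp [M, Matrix.sub_apply, Matrix.add_apply, Matrix.mul_diagonal, Matrix.diagonal_mul,
        Matrix.diagonal_apply, Matrix.one_apply, Matrix.smul_apply, hij]
      try ring
  rw [key]
  refine Matrix.PosSemidef.add (hW.conjTranspose_mul_mul_same _) ?_
  refine Matrix.posSemidef_diagonal_iff.mpr ?_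
  rintro ((i | i) | (i | i)) <;> simp [sv, ev, Real.mul_self_sqrt ht] <;> nlinarith

lemma M_posDef (hκ : 1 ≤ κ⁻¹) {t : ℝ} (ht : 0 ≤ t)
    (hW : (W - κ⁻¹ • (1 : Matrix _ _ ℝ)).PosSemidef) : (M t a b W).PosDef := by
  have h1 : (1 : Matrix ((Fin a ⊕ Fin a) ⊕ (Fin b ⊕ Fin b))
      ((Fin a ⊕ Fin a) ⊕ (Fin b ⊕ Fin b)) ℝ).PosDef := Matrix.PosDef.one
  have := h1.add_posSemidef (M_sub_one_posSemidef hκ ht hW)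
  simpa using this

lemma M_blocks₁₁_posDef (hκ : 1 ≤ κ⁻¹) {t : ℝ} (ht : 0 ≤ t)
    (hW : (W - κ⁻¹ • (1 : Matrix _ _ ℝ)).PosSemidef) : (M t a b W).toBlocks₁₁.PosDef := by
  have h := (M_sub_one_posSemidef hκ ht hW).submatrix (Sum.inl : (Fin a ⊕ Fin a) → _)
  have heq : (M t a b W - 1).submatrix (Sum.inl : (Fin a ⊕ Fin a) → _) Sum.inl
      = (M t a b W).toBlocks₁₁ - 1 := by
    ext i j
    simp [Matrix.submatrix_apply, Matrix.sub_apply, Matrix.toBlocks₁₁, Matrix.one_apply]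
  rw [heq] at h
  have h1 : (1 : Matrix (Fin a ⊕ Fin a) (Fin a ⊕ Fin a) ℝ).PosDef := Matrix.PosDef.one
  have := h1.add_posSemidef h
  simpa using this

lemma M_blocks₂₂_posDef (hκ : 1 ≤ κ⁻¹) {t : ℝ} (ht : 0 ≤ t)
    (hW : (W - κ⁻¹ • (1 : Matrix _ _ ℝ)).PosSemidef) : (M t a b W).toBlocks₂₂.PosDef := by
  have h := (M_sub_one_posSemidef hκ ht hW).submatrix (Sum.inr : (Fin b ⊕ Fin b) → _)
  have heq : (M t a b W - 1).submatrix (Sum.inr : (Fin b ⊕ Fin b) → _) Sum.inr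
      = (M t a b W).toBlocks₂₂ - 1 := by
    ext i j
    simp [Matrix.submatrix_apply, Matrix.sub_apply, Matrix.toBlocks₂₂, Matrix.one_apply]
  rw [heq] at h
  have h1 : (1 : Matrix (Fin b ⊕ Fin b) (Fin b ⊕ Fin b) ℝ).PosDef := Matrix.PosDef.one
  have := h1.add_posSemidef h
  simpa using this

end Pos

/-- comparison of infima of images over a set, up to `ε`. -/
lemma sInf_image_le_add {X : Type*} {s : Set X} (hs : s.Nonempty) (f₁ f₂ : X → ℝ) {ε : ℝ}
    (B₁ : BddBelow (f₁ '' s)) (h : ∀ W ∈ s, f₁ W ≤ f₂ W + ε) :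
    sInf (f₁ '' s) ≤ sInf (f₂ '' s) + ε := by
  rw [← sub_le_iff_le_add]
  apply le_csInf (hs.image _)
  rintro _ ⟨W, hW, rfl⟩
  have h1 := csInf_le B₁ (Set.mem_image_of_mem _ hW)
  have h2 := h W hW
  linarith

end HomodyneAux

set_option maxHeartbeats 1000000 in
/-- Homodyne limit. -/
theorem homodyne_limit {a b : ℕ} (κ : ℝ) (hκ0 : 0 < κ) (hκ1 : κ ≤ 1)
    (𝒲 : Set (Matrix ((Fin a ⊕ Fin a) ⊕ (Fin b ⊕ Fin b))
                      ((Fin a ⊕ Fin a) ⊕ (Fin b ⊕ Fin b)) ℝ))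
    (hne : 𝒲.Nonempty) (hcomp : IsCompact 𝒲)
    (hQCM : ∀ W ∈ 𝒲, W.IsSymm ∧
      ((W.map Complex.ofReal) -
        Complex.I • (fromBlocks (Omg a) 0 0 (Omg b)).map Complex.ofReal).PosSemidef ∧
      (W - κ⁻¹ • (1 : Matrix ((Fin a ⊕ Fin a) ⊕ (Fin b ⊕ Fin b))
                      ((Fin a ⊕ Fin a) ⊕ (Fin b ⊕ Fin b)) ℝ)).PosSemidef) :
    Filter.Tendsto
      (fun t : ℝ => sInf ((fun W => IM (W + fromBlocks (seed t a) 0 0 (seed t b))) '' 𝒲))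
      (nhdsWithin 0 (Set.Ioi 0))
      (nhds (sInf ((fun W => IM (W.submatrix
          (Sum.map Sum.inl Sum.inl : Fin a ⊕ Fin b → (Fin a ⊕ Fin a) ⊕ (Fin b ⊕ Fin b))
          (Sum.map Sum.inl Sum.inl : Fin a ⊕ Fin b → (Fin a ⊕ Fin a) ⊕ (Fin b ⊕ Fin b)))) '' 𝒲))) := by
  classical
  have hκ : (1:ℝ) ≤ κ⁻¹ := (one_le_inv₀ hκ0).mpr hκ1
  have hWpos : ∀ W ∈ 𝒲, (W - κ⁻¹ • (1 : Matrix ((Fin a ⊕ Fin a) ⊕ (Fin b ⊕ Fin b)) ((Fin a ⊕ Fin a) ⊕ (Fin b ⊕ Fin b)) ℝ)).PosSemidef := fun W hW => (hQCM W hW).2.2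
  -- continuity of (t, W) ↦ M t W
  have hD : Continuous fun p : ℝ × Matrix ((Fin a ⊕ Fin a) ⊕ (Fin b ⊕ Fin b)) ((Fin a ⊕ Fin a) ⊕ (Fin b ⊕ Fin b)) ℝ => Matrix.diagonal (HomodyneAux.sv p.1 a b) := by
    refine Continuous.matrix_diagonal (continuous_pi ?_)
    rintro ((i | i) | (i | i))
    · exact continuous_const
    · exact Real.continuous_sqrt.comp continuous_fst
    · exact continuous_const
    · exact Real.continuous_sqrt.comp continuous_fst
  have hE : Continuous fun p : ℝ × Matrix ((Fin a ⊕ Fin a) ⊕ (Fin b ⊕ Fin b)) ((Fin a ⊕ Fin a) ⊕ (Fin b ⊕ Fin b)) ℝ => Matrix.diagonal (HomodyneAux.ev p.1 a b) := by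
    refine Continuous.matrix_diagonal (continuous_pi ?_)
    rintro ((i | i) | (i | i))
    · exact continuous_fst
    · exact continuous_const
    · exact continuous_fst
    · exact continuous_const
  have hMcont : Continuous fun p : ℝ × Matrix ((Fin a ⊕ Fin a) ⊕ (Fin b ⊕ Fin b)) ((Fin a ⊕ Fin a) ⊕ (Fin b ⊕ Fin b)) ℝ => HomodyneAux.M p.1 a b p.2 :=
    ((hD.matrix_mul continuous_snd).matrix_mul hD).add hE
  have hd1 : Continuous fun p : ℝ × Matrix ((Fin a ⊕ Fin a) ⊕ (Fin b ⊕ Fin b)) ((Fin a ⊕ Fin a) ⊕ (Fin b ⊕ Fin b)) ℝ => ((HomodyneAux.M p.1 a b p.2).toBlocks₁₁).det :=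
    Continuous.matrix_det (continuous_matrix fun i j =>
      hMcont.matrix_elem (Sum.inl i) (Sum.inl j))
  have hd2 : Continuous fun p : ℝ × Matrix ((Fin a ⊕ Fin a) ⊕ (Fin b ⊕ Fin b)) ((Fin a ⊕ Fin a) ⊕ (Fin b ⊕ Fin b)) ℝ => ((HomodyneAux.M p.1 a b p.2).toBlocks₂₂).det :=
    Continuous.matrix_det (continuous_matrix fun i j =>
      hMcont.matrix_elem (Sum.inr i) (Sum.inr j))
  have hdd : Continuous fun p : ℝ × Matrix ((Fin a ⊕ Fin a) ⊕ (Fin b ⊕ Fin b)) ((Fin a ⊕ Fin a) ⊕ (Fin b ⊕ Fin b)) ℝ => (HomodyneAux.M p.1 a b p.2).det :=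
    hMcont.matrix_det
  -- continuity of the mutual information on `Ici 0 ×ˢ 𝒲`
  have hGcont : ContinuousOn (Function.uncurry fun (t : ℝ) (W : Matrix ((Fin a ⊕ Fin a) ⊕ (Fin b ⊕ Fin b)) ((Fin a ⊕ Fin a) ⊕ (Fin b ⊕ Fin b)) ℝ) =>
      IM (HomodyneAux.M t a b W)) (Set.Ici (0:ℝ) ×ˢ 𝒲) := by
    intro p hp
    have ht : (0:ℝ) ≤ p.1 := hp.1
    have hW := hWpos p.2 hp.2
    have hpos : 0 < (HomodyneAux.M p.1 a b p.2).det :=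
      (HomodyneAux.M_posDef hκ ht hW).det_pos
    have hpos1 : 0 < ((HomodyneAux.M p.1 a b p.2).toBlocks₁₁).det :=
      (HomodyneAux.M_blocks₁₁_posDef hκ ht hW).det_pos
    have hpos2 : 0 < ((HomodyneAux.M p.1 a b p.2).toBlocks₂₂).det :=
      (HomodyneAux.M_blocks₂₂_posDef hκ ht hW).det_pos
    have hratio : ((HomodyneAux.M p.1 a b p.2).toBlocks₁₁.det *
        (HomodyneAux.M p.1 a b p.2).toBlocks₂₂.det) / (HomodyneAux.M p.1 a b p.2).det ≠ 0 :=
      ne_of_gt (div_pos (mul_pos hpos1 hpos2) hpos)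
    have hh : ContinuousAt (fun p : ℝ × Matrix ((Fin a ⊕ Fin a) ⊕ (Fin b ⊕ Fin b)) ((Fin a ⊕ Fin a) ⊕ (Fin b ⊕ Fin b)) ℝ =>
        ((HomodyneAux.M p.1 a b p.2).toBlocks₁₁.det *
          (HomodyneAux.M p.1 a b p.2).toBlocks₂₂.det) / (HomodyneAux.M p.1 a b p.2).det) p :=
      ((hd1.continuousAt.mul hd2.continuousAt).div hdd.continuousAt hpos.ne')
    refine ContinuousAt.continuousWithinAt ?_
    have h2 : ContinuousAt (fun q : ℝ × Matrix ((Fin a ⊕ Fin a) ⊕ (Fin b ⊕ Fin b)) ((Fin a ⊕ Fin a) ⊕ (Fin b ⊕ Fin b)) ℝ =>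
        Real.logb 2 (((HomodyneAux.M q.1 a b q.2).toBlocks₁₁.det *
          (HomodyneAux.M q.1 a b q.2).toBlocks₂₂.det) / (HomodyneAux.M q.1 a b q.2).det)) p :=
      ContinuousAt.comp (g := Real.logb 2)
        (f := fun q : ℝ × Matrix ((Fin a ⊕ Fin a) ⊕ (Fin b ⊕ Fin b)) ((Fin a ⊕ Fin a) ⊕ (Fin b ⊕ Fin b)) ℝ =>
          ((HomodyneAux.M q.1 a b q.2).toBlocks₁₁.det *
            (HomodyneAux.M q.1 a b q.2).toBlocks₂₂.det) / (HomodyneAux.M q.1 a b q.2).det)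
        (Real.continuousAt_logb (b := 2) hratio) hh
    show ContinuousAt (fun q : ℝ × Matrix ((Fin a ⊕ Fin a) ⊕ (Fin b ⊕ Fin b)) ((Fin a ⊕ Fin a) ⊕ (Fin b ⊕ Fin b)) ℝ => IM (HomodyneAux.M q.1 a b q.2)) p
    simp only [IM]
    exact continuousAt_const.mul h2
  -- slice continuity and lower bounds
  have hslice : ∀ t : ℝ, 0 ≤ t →
      ContinuousOn (fun W : Matrix ((Fin a ⊕ Fin a) ⊕ (Fin b ⊕ Fin b)) ((Fin a ⊕ Fin a) ⊕ (Fin b ⊕ Fin b)) ℝ => IM (HomodyneAux.M t a b W)) 𝒲 := by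
    intro t ht
    have hmap : Set.MapsTo (fun W : Matrix ((Fin a ⊕ Fin a) ⊕ (Fin b ⊕ Fin b)) ((Fin a ⊕ Fin a) ⊕ (Fin b ⊕ Fin b)) ℝ => ((t, W) : ℝ × Matrix ((Fin a ⊕ Fin a) ⊕ (Fin b ⊕ Fin b)) ((Fin a ⊕ Fin a) ⊕ (Fin b ⊕ Fin b)) ℝ)) 𝒲 (Set.Ici (0:ℝ) ×ˢ 𝒲) :=
      fun W hW => ⟨ht, hW⟩
    have h := hGcont.comp ((continuous_const.prodMk continuous_id).continuousOn) hmap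
    simpa only [Function.comp_def, Function.uncurry_apply_pair, id_eq] using h
  -- the key limit for the regularized functional
  have hkey : Filter.Tendsto (fun t : ℝ => sInf ((fun W => IM (HomodyneAux.M t a b W)) '' 𝒲))
      (nhdsWithin 0 (Set.Ioi 0)) (nhds (sInf ((fun W => IM (HomodyneAux.M 0 a b W)) '' 𝒲))) := by
    rw [Metric.tendsto_nhdsWithin_nhds]
    intro ε hε
    obtain ⟨v, hv, hvp⟩ := hcomp.mem_uniformity_of_prod hGcont (Set.self_mem_Ici)
      (Metric.dist_mem_uniformity (show (0:ℝ) < ε/2 by positivity))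
    rw [Metric.mem_nhdsWithin_iff] at hv
    obtain ⟨δ, hδ, hball⟩ := hv
    refine ⟨δ, hδ, fun {t} htI hdist => ?_⟩
    have htv : t ∈ v := hball ⟨by simpa [Metric.mem_ball] using hdist, Set.mem_Ici.mpr (le_of_lt (Set.mem_Ioi.mp htI))⟩
    have hbound : ∀ W ∈ 𝒲, dist (IM (HomodyneAux.M t a b W)) (IM (HomodyneAux.M 0 a b W)) < ε/2 :=
      fun W hW => hvp t htv W hW
    have ht0 : (0:ℝ) ≤ t := le_of_lt htI
    have h1 : sInf ((fun W => IM (HomodyneAux.M t a b W)) '' 𝒲)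
        ≤ sInf ((fun W => IM (HomodyneAux.M 0 a b W)) '' 𝒲) + ε/2 := by
      refine HomodyneAux.sInf_image_le_add hne _ _
        (hcomp.image_of_continuousOn (hslice t ht0)).bddBelow fun W hW => ?_
      have := hbound W hW
      rw [Real.dist_eq] at this
      have := abs_lt.mp this
      linarith [this.2]
    have h2 : sInf ((fun W => IM (HomodyneAux.M 0 a b W)) '' 𝒲)
        ≤ sInf ((fun W => IM (HomodyneAux.M t a b W)) '' 𝒲) + ε/2 := by
      refine HomodyneAux.sInf_image_le_add hne _ _
        (hcomp.image_of_continuousOn (hslice 0 le_rfl)).bddBelow fun W hW => ?_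
      have := hbound W hW
      rw [Real.dist_eq] at this
      have := abs_lt.mp this
      linarith [this.1]
    rw [Real.dist_eq, abs_lt]
    constructor <;> linarith
  -- identify both sides
  have hR : sInf ((fun W => IM (W.submatrix
        (Sum.map Sum.inl Sum.inl : Fin a ⊕ Fin b → (Fin a ⊕ Fin a) ⊕ (Fin b ⊕ Fin b))
        (Sum.map Sum.inl Sum.inl : Fin a ⊕ Fin b → (Fin a ⊕ Fin a) ⊕ (Fin b ⊕ Fin b)))) '' 𝒲)
      = sInf ((fun W => IM (HomodyneAux.M 0 a b W)) '' 𝒲) :=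
    congrArg sInf (Set.image_congr fun W _ => (HomodyneAux.IM_M_zero W).symm)
  rw [hR]
  refine Filter.Tendsto.congr' ?_ hkey
  filter_upwards [self_mem_nhdsWithin] with t ht
  exact congrArg sInf (Set.image_congr fun W _ => (HomodyneAux.IM_seed_eq ht W).symm)
end
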